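/- Let (V, J, R) be an algebraic Kähler model of real dimension 2m with m ≥ 2, and suppose ⟨R(X,JX)Y,JX⟩ = 0 for all vectors X, Y ∈ V such that X, JX, Y, JY are orthonormal (pointwise constant holomorphic sectional curvature). Then every J-invariant subspace W of V is very special for R: for all v, w ∈ W one has R(v, w) v ∈ W. -/

import Mathlib

open RealInnerProductSpace Module

/-- An algebraic curvature tensor on a real inner product space `V`. -/
structure CurvatureTensor (V : Type*) [NormedAddCommGroup V] [InnerProductSpace ℝ V] where
  R : V → V → V → V
  lin₁ : ∀ Y Z, IsLinearMap ℝ fun X => R X Y Z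
  lin₂ : ∀ X Z, IsLinearMap ℝ fun Y => R X Y Z
  lin₃ : ∀ X Y, IsLinearMap ℝ fun Z => R X Y Z
  antisymm₁ : ∀ X Y Z W, ⟪R X Y Z, W⟫ = -⟪R Y X Z, W⟫
  antisymm₂ : ∀ X Y Z W, ⟪R X Y Z, W⟫ = -⟪R X Y W, Z⟫
  pair_symm : ∀ X Y Z W, ⟪R X Y Z, W⟫ = ⟪R Z W X, Y⟫
  bianchi : ∀ X Y Z, R X Y Z + R Y Z X + R Z X Y = 0

/-- An algebraic Kähler model: an algebraic curvature tensor together with a compatible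
orthogonal complex structure `J`. -/
structure KahlerModel (V : Type*) [NormedAddCommGroup V] [InnerProductSpace ℝ V]
    extends CurvatureTensor V where
  J : V →ₗ[ℝ] V
  J_isometry : ∀ X Y, ⟪J X, J Y⟫ = ⟪X, Y⟫
  J_sq : ∀ X, J (J X) = -X
  R_J_invariant : ∀ X Y Z, R (J X) (J Y) Z = R X Y Z
  R_J_commute : ∀ X Y Z, R X Y (J Z) = J (R X Y Z)

/-! With `Ψ X = R(X, JX)JX`, the hypothesis says `⟪Ψ X, U⟫ = 0` whenever `U ⊥ X, JX`, so `Ψ X`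
lies in the complex line spanned by `X` and `JX`; hence `Ψ` maps a `J`-invariant subspace `W`
into itself, and so does its polarization `D`, since `2 D(X, Y) = Ψ(X + Y) - Ψ(X - Y) - 2 Ψ Y`.
The Bianchi identity and the `J`-invariance of `R` give `8 R(X, Y)X = D(X, Y) - 3 D(JX, Y)`. -/

namespace CurvatureTensor

variable {V : Type*} [NormedAddCommGroup V] [InnerProductSpace ℝ V] (C : CurvatureTensor V)

@[simp] lemma R_add₁ (X X' Y Z : V) : C.R (X + X') Y Z = C.R X Y Z + C.R X' Y Z :=
  (C.lin₁ Y Z).map_add X X'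

@[simp] lemma R_add₂ (X Y Y' Z : V) : C.R X (Y + Y') Z = C.R X Y Z + C.R X Y' Z :=
  (C.lin₂ X Z).map_add Y Y'

@[simp] lemma R_add₃ (X Y Z Z' : V) : C.R X Y (Z + Z') = C.R X Y Z + C.R X Y Z' :=
  (C.lin₃ X Y).map_add Z Z'

@[simp] lemma R_zero₁ (Y Z : V) : C.R 0 Y Z = 0 :=
  (C.lin₁ Y Z).map_zero

@[simp] lemma R_neg₁ (X Y Z : V) : C.R (-X) Y Z = -C.R X Y Z :=
  (C.lin₁ Y Z).map_neg X

@[simp] lemma R_neg₂ (X Y Z : V) : C.R X (-Y) Z = -C.R X Y Z :=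
  (C.lin₂ X Z).map_neg Y

@[simp] lemma R_neg₃ (X Y Z : V) : C.R X Y (-Z) = -C.R X Y Z :=
  (C.lin₃ X Y).map_neg Z

@[simp] lemma R_smul₁ (a : ℝ) (X Y Z : V) : C.R (a • X) Y Z = a • C.R X Y Z :=
  (C.lin₁ Y Z).map_smul a X

@[simp] lemma R_smul₂ (a : ℝ) (X Y Z : V) : C.R X (a • Y) Z = a • C.R X Y Z :=
  (C.lin₂ X Z).map_smul a Y

@[simp] lemma R_smul₃ (a : ℝ) (X Y Z : V) : C.R X Y (a • Z) = a • C.R X Y Z :=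
  (C.lin₃ X Y).map_smul a Z

lemma R_swap (X Y Z : V) : C.R Y X Z = -C.R X Y Z :=
  ext_inner_right ℝ fun W => by rw [inner_neg_left, C.antisymm₁]

end CurvatureTensor

namespace KahlerModel

variable {V : Type*} [NormedAddCommGroup V] [InnerProductSpace ℝ V] (T : KahlerModel V)

lemma inner_J_left (X Y : V) : ⟪T.J X, Y⟫ = -⟪X, T.J Y⟫ := by
  rw [← T.J_isometry X (T.J Y), T.J_sq, inner_neg_right, neg_neg]

lemma inner_J_self (X : V) : ⟪X, T.J X⟫ = 0 := by
  have h := T.inner_J_left X X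
  rw [real_inner_comm] at h
  linarith

lemma inner_J_self_left (X : V) : ⟪T.J X, X⟫ = 0 := by
  rw [real_inner_comm, T.inner_J_self]

lemma norm_J (X : V) : ‖T.J X‖ = ‖X‖ := by
  rw [norm_eq_sqrt_real_inner, norm_eq_sqrt_real_inner, T.J_isometry]

lemma orthonormal_J_frame {X Y : V} (hX : ‖X‖ = 1) (hY : ‖Y‖ = 1)
    (hXY : ⟪X, Y⟫ = 0) (hJXY : ⟪T.J X, Y⟫ = 0) :
    Orthonormal ℝ ![X, T.J X, Y, T.J Y] := by
  have hXJY : ⟪X, T.J Y⟫ = 0 := by rw [← neg_eq_zero, ← T.inner_J_left, hJXY]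
  have hYX : ⟪Y, X⟫ = 0 := by rw [real_inner_comm, hXY]
  have hYJX : ⟪Y, T.J X⟫ = 0 := by rw [real_inner_comm, hJXY]
  have hJYX : ⟪T.J Y, X⟫ = 0 := by rw [real_inner_comm, hXJY]
  rw [orthonormal_iff_ite]
  intro i j
  fin_cases i <;> fin_cases j <;>
    simp [T.norm_J, T.J_isometry, T.inner_J_self, T.inner_J_self_left,
      hX, hY, hXY, hJXY, hXJY, hYX, hYJX, hJYX]

def holCurv (X : V) : V := T.R X (T.J X) (T.J X)

def holCurvDeriv (X Y : V) : V :=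
  T.R X (T.J X) (T.J Y) + T.R X (T.J Y) (T.J X) + T.R Y (T.J X) (T.J X)

lemma two_smul_holCurvDeriv (X Y : V) :
    (2 : ℝ) • T.holCurvDeriv X Y =
      T.holCurv (X + Y) - T.holCurv (X - Y) - (2 : ℝ) • T.holCurv Y := by
  simp only [holCurvDeriv, holCurv, sub_eq_add_neg, map_add, map_neg,
    CurvatureTensor.R_add₁, CurvatureTensor.R_add₂, CurvatureTensor.R_add₃,
    CurvatureTensor.R_neg₁, CurvatureTensor.R_neg₂, CurvatureTensor.R_neg₃]
  module

lemma eight_smul_R_eq (X Y : V) :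
    (8 : ℝ) • T.R X Y X = T.holCurvDeriv X Y - (3 : ℝ) • T.holCurvDeriv (T.J X) Y := by
  have hbianchi := T.bianchi X (T.J X) (T.J Y)
  rw [T.R_J_invariant] at hbianchi
  have h₁ := T.R_swap (T.J Y) X (T.J X)
  have h₂ := T.R_swap (T.J X) X (T.J Y)
  have h₃ := T.R_swap Y X X
  have h₄ : T.R Y (T.J X) (T.J X) = T.R X (T.J Y) (T.J X) := by
    rw [← T.R_J_invariant Y, T.J_sq, T.R_neg₂, T.R_swap, neg_neg]
  simp only [holCurvDeriv, T.J_sq, T.R_neg₂, T.R_neg₃, T.R_J_invariant, neg_neg]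
  linear_combination (norm := module)
    (2 : ℝ) • hbianchi - (2 : ℝ) • h₁ - (3 : ℝ) • h₂ + (3 : ℝ) • h₃ - h₄

def IsPointwiseConstHolomorphic : Prop :=
  ∀ X Y : V, Orthonormal ℝ ![X, T.J X, Y, T.J Y] → ⟪T.R X (T.J X) Y, T.J X⟫ = 0

lemma inner_holCurv_eq_zero {X U : V} (hT : T.IsPointwiseConstHolomorphic)
    (hXU : ⟪X, U⟫ = 0) (hJXU : ⟪T.J X, U⟫ = 0) : ⟪T.holCurv X, U⟫ = 0 := by
  rcases eq_or_ne X 0 with rfl | hX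
  · simp [holCurv]
  rcases eq_or_ne U 0 with rfl | hU
  · simp
  have hframe := T.orthonormal_J_frame (X := ‖X‖⁻¹ • X) (Y := ‖U‖⁻¹ • U)
    (norm_smul_inv_norm hX) (norm_smul_inv_norm hU)
    (by simp [real_inner_smul_left, real_inner_smul_right, hXU])
    (by simp [real_inner_smul_left, real_inner_smul_right, hJXU])
  have hunit := hT _ _ hframe
  rw [T.antisymm₂] at hunit
  simpa [holCurv, hX, hU, real_inner_smul_left, real_inner_smul_right] using hunit

lemma holCurv_mem_span (hT : T.IsPointwiseConstHolomorphic) (X : V) :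
    T.holCurv X ∈ Submodule.span ℝ {X, T.J X} := by
  have : FiniteDimensional ℝ (Submodule.span ℝ {X, T.J X}) :=
    FiniteDimensional.span_of_finite ℝ (Set.toFinite _)
  rw [← Submodule.orthogonal_orthogonal (Submodule.span ℝ {X, T.J X}), Submodule.mem_orthogonal]
  intro U hU
  rw [real_inner_comm]
  exact T.inner_holCurv_eq_zero hT (hU X (Submodule.subset_span (by simp)))
    (hU (T.J X) (Submodule.subset_span (by simp)))

lemma R_mem_of_holCurv_mem {W : Submodule ℝ V} (hJ : ∀ X ∈ W, T.J X ∈ W)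
    (hW : ∀ X ∈ W, T.holCurv X ∈ W) {X Y : V} (hX : X ∈ W) (hY : Y ∈ W) : T.R X Y X ∈ W := by
  have hderiv : ∀ A ∈ W, ∀ B ∈ W, T.holCurvDeriv A B ∈ W := by
    intro A hA B hB
    rw [← W.smul_mem_iff (two_ne_zero : (2 : ℝ) ≠ 0), two_smul_holCurvDeriv]
    exact W.sub_mem (W.sub_mem (hW _ (W.add_mem hA hB)) (hW _ (W.sub_mem hA hB)))
      (W.smul_mem _ (hW B hB))
  rw [← W.smul_mem_iff (by norm_num : (8 : ℝ) ≠ 0), eight_smul_R_eq]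
  exact W.sub_mem (hderiv X hX Y hY) (W.smul_mem _ (hderiv _ (hJ X hX) Y hY))

end KahlerModel

theorem holomorphic_subspace_verySpecial_of_constant_holomorphic_general {V : Type*} [NormedAddCommGroup V] [InnerProductSpace ℝ V]
    (T : KahlerModel V)
    (hconst : ∀ X Y : V, Orthonormal ℝ ![X, T.J X, Y, T.J Y] →
      ⟪T.R X (T.J X) Y, T.J X⟫ = 0)
    (W : Submodule ℝ V) (hJW : W.map T.J = W)
    (v w : V) (hv : v ∈ W) (hw : w ∈ W) :
    T.R v w v ∈ W := by
  have hJ : ∀ X ∈ W, T.J X ∈ W := fun X hX => hJW ▸ Submodule.mem_map_of_mem hX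
  refine T.R_mem_of_holCurv_mem hJ (fun X hX => ?_) hv hw
  exact Submodule.span_le.2 (Set.insert_subset_iff.2 ⟨hX, Set.singleton_subset_iff.2 (hJ X hX)⟩)
    (T.holCurv_mem_span hconst X)

theorem holomorphic_subspace_verySpecial_of_constant_holomorphic {V : Type*} [NormedAddCommGroup V] [InnerProductSpace ℝ V] [FiniteDimensional ℝ V]
    (T : KahlerModel V) (m : ℕ) (hm : 2 ≤ m) (hdim : finrank ℝ V = 2 * m)
    (hconst : ∀ X Y : V, Orthonormal ℝ ![X, T.J X, Y, T.J Y] →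
      ⟪T.R X (T.J X) Y, T.J X⟫ = 0)
    (W : Submodule ℝ V) (hJW : W.map T.J = W)
    (v w : V) (hv : v ∈ W) (hw : w ∈ W) :
    T.R v w v ∈ W :=
  holomorphic_subspace_verySpecial_of_constant_holomorphic_general T hconst W hJW v w hv hw
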